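/- Let a, b : Fin 3 → ℝ and C : Matrix (Fin 3) (Fin 3) ℝ, and let X := 4 • ρ(a,b,C) − I₄ : Matrix (Fin 2 × Fin 2) (Fin 2 × Fin 2) ℂ. Then the characteristic polynomial of X equals x⁴ + p·x² + q·x + r in ℂ[x] (with the real coefficients coerced to ℂ), where p = −2·(⟨C,C⟩ + |a|² + |b|²), q = −8·(⟨a, C.mulVec b⟩ − det C), and r = ⟨C,C⟩² + 2·(|a|² + |b|²)·⟨C,C⟩ + (|a|² − |b|²)² − 4·(⟨Ĉ,Ĉ⟩ + ⟨a, (C*Cᵀ).mulVec a⟩ + ⟨b, (Cᵀ*C).mulVec b⟩) + 8·⟨a, Ĉ.mulVec b⟩, with Ĉ := (Matrix.adjugate C)ᵀ. -/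

import Mathlib

/-!
`X = 4ρ - 1 = ∑ aᵢ σᵢ ⊗ 1 + ∑ bⱼ 1 ⊗ σⱼ + ∑ Cᵢⱼ σᵢ ⊗ σⱼ` is traceless, so by Newton's identities
its characteristic polynomial is `x⁴ - tr(X²)/2 · x² - tr(X³)/3 · x + det X`. Trace-orthogonality
of the Pauli matrices gives `tr(X²) = 4(⟨C,C⟩ + |a|² + |b|²)`, and `tr(σᵢσⱼσₖ) = 2i εᵢⱼₖ` gives
`tr(X³) = 24(⟨a, C b⟩ - det C)`; the constant term is the cofactor expansion of `det X`.
-/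

open Matrix Kronecker Polynomial

/-- The three Pauli matrices (indexed by `Fin 3`, so `pauli 0 = σ₁`, etc.). -/
noncomputable def pauli : Fin 3 → Matrix (Fin 2) (Fin 2) ℂ :=
  ![!![0, 1; 1, 0], !![0, -Complex.I; Complex.I, 0], !![1, 0; 0, -1]]

/-- The two-qubit Bloch matrix `ρ(a,b,C)`. -/
noncomputable def blochMat (a b : Fin 3 → ℝ) (C : Matrix (Fin 3) (Fin 3) ℝ) :
    Matrix (Fin 2 × Fin 2) (Fin 2 × Fin 2) ℂ :=
  (1 / 4 : ℂ) •
    ((1 : Matrix (Fin 2) (Fin 2) ℂ) ⊗ₖ (1 : Matrix (Fin 2) (Fin 2) ℂ)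
      + ∑ i, (a i : ℂ) • (pauli i ⊗ₖ (1 : Matrix (Fin 2) (Fin 2) ℂ))
      + ∑ j, (b j : ℂ) • ((1 : Matrix (Fin 2) (Fin 2) ℂ) ⊗ₖ pauli j)
      + ∑ i, ∑ j, (C i j : ℂ) • (pauli i ⊗ₖ pauli j))

namespace Matrix

theorem det_fin_four {R : Type*} [CommRing R] (A : Matrix (Fin 4) (Fin 4) R) :
    A.det = A 0 0 * !![A 1 1, A 1 2, A 1 3; A 2 1, A 2 2, A 2 3; A 3 1, A 3 2, A 3 3].det
      - A 0 1 * !![A 1 0, A 1 2, A 1 3; A 2 0, A 2 2, A 2 3; A 3 0, A 3 2, A 3 3].det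
      + A 0 2 * !![A 1 0, A 1 1, A 1 3; A 2 0, A 2 1, A 2 3; A 3 0, A 3 1, A 3 3].det
      - A 0 3 * !![A 1 0, A 1 1, A 1 2; A 2 0, A 2 1, A 2 2; A 3 0, A 3 1, A 3 2].det := by
  simp only [det_succ_row_zero, submatrix_apply, Fin.succ_zero_eq_one, Fin.succ_one_eq_two,
    Fin.sum_univ_succ, Fin.zero_succAbove, Fin.succ_succAbove_zero, Fin.succ_succAbove_one,
    Finset.univ_unique, Finset.sum_singleton, det_unique, Fin.default_eq_zero, Fin.val_zero,
    Fin.val_succ, Fin.val_eq_zero]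
  simp [Fin.succAbove, Fin.lt_def]
  ring

theorem charpoly_fin_four_of_trace_eq_zero {K : Type*} [Field K] [CharZero K]
    (M : Matrix (Fin 4) (Fin 4) K) (hM : M.trace = 0) :
    M.charpoly = X ^ 4 + C (-(M ^ 2).trace / 2) * X ^ 2 + C (-(M ^ 3).trace / 3) * X + C M.det := by
  have h33 : M 3 3 = -(M 0 0 + M 1 1 + M 2 2) := by
    rw [Matrix.trace, Fin.sum_univ_four] at hM
    simp only [diag_apply] at hM
    linear_combination hM
  apply Polynomial.funext
  intro t
  simp only [eval_charpoly, det_fin_four, eval_add, eval_mul, eval_C, eval_X, eval_pow]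
  simp [pow_succ, Matrix.trace, mul_apply, Fin.sum_univ_four, det_fin_three, h33]
  ring

end Matrix

/-- The matrix of `4 • blochMat a b C - 1` in the basis `|00⟩, |01⟩, |10⟩, |11⟩`. -/
noncomputable def shiftedBlochMatFin4 (a b : Fin 3 → ℝ) (C : Matrix (Fin 3) (Fin 3) ℝ) :
    Matrix (Fin 4) (Fin 4) ℂ :=
  !![⟨a 2 + b 2 + C 2 2, 0⟩, ⟨b 0 + C 2 0, -(b 1 + C 2 1)⟩,
      ⟨a 0 + C 0 2, -(a 1 + C 1 2)⟩, ⟨C 0 0 - C 1 1, -(C 0 1 + C 1 0)⟩;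
    ⟨b 0 + C 2 0, b 1 + C 2 1⟩, ⟨a 2 - b 2 - C 2 2, 0⟩,
      ⟨C 0 0 + C 1 1, C 0 1 - C 1 0⟩, ⟨a 0 - C 0 2, -(a 1 - C 1 2)⟩;
    ⟨a 0 + C 0 2, a 1 + C 1 2⟩, ⟨C 0 0 + C 1 1, -(C 0 1 - C 1 0)⟩,
      ⟨-a 2 + b 2 - C 2 2, 0⟩, ⟨b 0 - C 2 0, -(b 1 - C 2 1)⟩;
    ⟨C 0 0 - C 1 1, C 0 1 + C 1 0⟩, ⟨a 0 - C 0 2, a 1 - C 1 2⟩,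
      ⟨b 0 - C 2 0, b 1 - C 2 1⟩, ⟨-a 2 - b 2 + C 2 2, 0⟩]

section ShiftedBlochMatFin4

variable (a b : Fin 3 → ℝ) (C : Matrix (Fin 3) (Fin 3) ℝ)

theorem reindex_shifted_blochMat :
    reindex finProdFinEquiv finProdFinEquiv ((4 : ℂ) • blochMat a b C - 1) =
      shiftedBlochMatFin4 a b C := by
  have e0 : (finProdFinEquiv.symm (0 : Fin 4) : Fin 2 × Fin 2) = (0, 0) := rfl
  have e1 : (finProdFinEquiv.symm (1 : Fin 4) : Fin 2 × Fin 2) = (0, 1) := rfl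
  have e2 : (finProdFinEquiv.symm (2 : Fin 4) : Fin 2 × Fin 2) = (1, 0) := rfl
  have e3 : (finProdFinEquiv.symm (3 : Fin 4) : Fin 2 × Fin 2) = (1, 1) := rfl
  ext i j
  fin_cases i <;> fin_cases j <;>
    simp only [Fin.reduceFinMk, Fin.isValue, reindex_apply, submatrix_apply, e0, e1, e2, e3] <;>
    apply Complex.ext <;>
    simp [shiftedBlochMatFin4, blochMat, pauli, Fin.sum_univ_three] <;> ring

theorem trace_shiftedBlochMatFin4 : (shiftedBlochMatFin4 a b C).trace = 0 := by
  simp [Matrix.trace, Fin.sum_univ_four, shiftedBlochMatFin4, Complex.ext_iff]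
  ring

theorem trace_sq_shiftedBlochMatFin4 :
    (shiftedBlochMatFin4 a b C ^ 2).trace =
      ((4 * ((Cᵀ * C).trace + ∑ i, a i ^ 2 + ∑ i, b i ^ 2) : ℝ) : ℂ) := by
  apply Complex.ext <;>
    simp [sq, Matrix.trace, mul_apply, Fin.sum_univ_four, Fin.sum_univ_three,
      shiftedBlochMatFin4] <;> ring

theorem trace_pow_three_shiftedBlochMatFin4 :
    (shiftedBlochMatFin4 a b C ^ 3).trace =
      ((24 * (∑ i, a i * C.mulVec b i - C.det) : ℝ) : ℂ) := by
  apply Complex.ext <;>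
    simp [pow_succ, Matrix.trace, Fin.sum_univ_four, Fin.sum_univ_three, shiftedBlochMatFin4,
      mulVec, dotProduct, det_fin_three] <;> ring

set_option maxRecDepth 10000 in
theorem det_shiftedBlochMatFin4 :
    (shiftedBlochMatFin4 a b C).det =
      ((((Cᵀ * C).trace) ^ 2
          + 2 * ((∑ i, a i ^ 2) + (∑ i, b i ^ 2)) * (Cᵀ * C).trace
          + ((∑ i, a i ^ 2) - (∑ i, b i ^ 2)) ^ 2
          - 4 * (((((C.adjugate)ᵀ)ᵀ * (C.adjugate)ᵀ).trace)
              + (∑ i, a i * (C * Cᵀ).mulVec a i)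
              + (∑ i, b i * (Cᵀ * C).mulVec b i))
          + 8 * (∑ i, a i * ((C.adjugate)ᵀ).mulVec b i) : ℝ) : ℂ) := by
  rw [det_fin_four]
  apply Complex.ext <;> simp only [Complex.ofReal_re, Complex.ofReal_im] <;>
    simp [shiftedBlochMatFin4, det_fin_three, Matrix.trace, mul_apply, Fin.sum_univ_three, mulVec,
      vecMul, dotProduct, adjugate_fin_three] <;> ring

end ShiftedBlochMatFin4

theorem charpoly_of_shifted_bloch_matrix
    (a b : Fin 3 → ℝ) (C : Matrix (Fin 3) (Fin 3) ℝ) :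
    Matrix.charpoly
        ((4 : ℂ) • blochMat a b C - (1 : Matrix (Fin 2 × Fin 2) (Fin 2 × Fin 2) ℂ)) =
      X ^ 4
        + Polynomial.C ((-2 * ((Cᵀ * C).trace + (∑ i, a i ^ 2) + (∑ i, b i ^ 2)) : ℝ) : ℂ)
            * X ^ 2
        + Polynomial.C ((-8 * ((∑ i, a i * C.mulVec b i) - C.det) : ℝ) : ℂ) * X
        + Polynomial.C
            ((((Cᵀ * C).trace) ^ 2
                + 2 * ((∑ i, a i ^ 2) + (∑ i, b i ^ 2)) * (Cᵀ * C).trace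
                + ((∑ i, a i ^ 2) - (∑ i, b i ^ 2)) ^ 2
                - 4 * (((((C.adjugate)ᵀ)ᵀ * (C.adjugate)ᵀ).trace)
                    + (∑ i, a i * (C * Cᵀ).mulVec a i)
                    + (∑ i, b i * (Cᵀ * C).mulVec b i))
                + 8 * (∑ i, a i * ((C.adjugate)ᵀ).mulVec b i) : ℝ) : ℂ) := by
  rw [← charpoly_reindex finProdFinEquiv, reindex_shifted_blochMat,
    charpoly_fin_four_of_trace_eq_zero _ (trace_shiftedBlochMatFin4 a b C),
    trace_sq_shiftedBlochMatFin4, trace_pow_three_shiftedBlochMatFin4, det_shiftedBlochMatFin4]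
  congr 4
  · rw [C_inj]
    push_cast
    ring
  · push_cast
    ring
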